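/- arXiv:1706.07603 — 5 statements merged into one kernel-verified Lean document; each statement's English description precedes it below -/
import Mathlib

section
/- Let α_1,...,α_s ∈ ℕ^s be points each of whose coordinate sums is at most d. Consider the hyperplane in ℝ^s through α_1,...,α_s (assumed affinely independent), written as a'_1 x_1 + ... + a'_s x_s = b' where a'_i is the (1,i)-cofactor of the (s+1)×(s+1) determinant with first row (x_1,...,x_s,1) and remaining rows (α_{i1},...,α_{is},1). Then |a'_i| ≤ s·d^{s−1} for each i. -/
open MvPolynomial Pointwise

/-- `J` is the integral closure of the ideal `I`: the set of elements `x` satisfying an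
integral relation `x^n + a_1 x^{n-1} + ... + a_n = 0` with `a_i ∈ I^i`. -/
def IsIntClosure {R : Type*} [CommRing R] (I J : Ideal R) : Prop :=
  ∀ x : R, x ∈ J ↔ ∃ n : ℕ, 0 < n ∧ ∃ a : ℕ → R, (∀ i, a i ∈ I ^ i) ∧
    x ^ n + ∑ i ∈ Finset.Icc 1 n, a i * x ^ (n - i) = 0

/-- A monomial ideal in a polynomial ring: an ideal generated by monomials. -/
def IsMonomialIdeal {k : Type*} [Field k] {σ : Type*} (I : Ideal (MvPolynomial σ k)) : Prop :=
  ∃ S : Set (σ →₀ ℕ), I = Ideal.span ((fun a => (monomial a (1 : k))) '' S)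

/-- depth of `R/J` with respect to the ideal `m`: the supremum of lengths of regular
sequences on `R/J` consisting of elements of `m`. -/
noncomputable def quotDepth {R : Type*} [CommRing R] (m J : Ideal R) : ℕ :=
  sSup {n : ℕ | ∃ rs : List R, rs.length = n ∧ (∀ x ∈ rs, x ∈ m) ∧
    RingTheory.Sequence.IsRegular (R ⧸ J) rs}

/-- `R/J` is Cohen-Macaulay: depth equals Krull dimension. -/
def QuotIsCM {R : Type*} [CommRing R] (m J : Ideal R) : Prop :=
  (quotDepth m J : WithBot ℕ∞) = ringKrullDim (R ⧸ J)

/-- Krull dimension of a ring, as a natural number. -/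
noncomputable def dimNat (R : Type*) [CommRing R] : ℕ :=
  ENat.toNat ((ringKrullDim R).unbotD 0)

/-- analytic spread of `I`: the Krull dimension of the fiber cone, i.e. of the
Rees algebra of `I` modulo the extension of the maximal ideal `m`. -/
noncomputable def analyticSpread {R : Type*} [CommRing R] (m I : Ideal R) : ℕ :=
  dimNat ((reesAlgebra I) ⧸ (Ideal.map (algebraMap R (reesAlgebra I)) m))

/-- height of an ideal: infimum of heights of primes containing it. -/
noncomputable def idealHeight {R : Type*} [CommRing R] (I : Ideal R) : ℕ∞ :=
  ⨅ p ∈ {p : PrimeSpectrum R | I ≤ p.asIdeal}, Order.height p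

/-- the maximal homogeneous ideal `(x_1,...,x_r)` of a polynomial ring. -/
noncomputable def maxIdeal (k : Type*) [Field k] (σ : Type*) : Ideal (MvPolynomial σ k) :=
  Ideal.span (Set.range X)

/-- exponent set of a monomial ideal, viewed in `ℝ^r`. -/
def expSet {k : Type*} [Field k] {r : ℕ} (I : Ideal (MvPolynomial (Fin r) k)) :
    Set (Fin r → ℝ) :=
  {x | ∃ a : Fin r →₀ ℕ, monomial a (1 : k) ∈ I ∧ x = fun i => (a i : ℝ)}

/-- Newton polyhedron of a monomial ideal: convex hull of the exponent set. -/
noncomputable def newtonPolyhedron {k : Type*} [Field k] {r : ℕ}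
    (I : Ideal (MvPolynomial (Fin r) k)) : Set (Fin r → ℝ) :=
  convexHull ℝ (expSet I)

/-- a simplicial complex on the vertex set `σ`: a downward closed family of finite sets. -/
def IsSimplicialComplex {σ : Type*} (Δ : Set (Finset σ)) : Prop :=
  ∅ ∈ Δ ∧ ∀ F ∈ Δ, ∀ G ⊆ F, G ∈ Δ

/-- Stanley-Reisner ideal of a simplicial complex: generated by the squarefree
monomials corresponding to non-faces. -/
noncomputable def srIdeal {k : Type*} [Field k] {σ : Type*} (Δ : Set (Finset σ)) :
    Ideal (MvPolynomial σ k) :=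
  Ideal.span {f | ∃ F : Finset σ, F ∉ Δ ∧ f = ∏ i ∈ F, X i}

/-- the degree complex `Δ_α(J)` of a monomial ideal `J`:
`F ∈ Δ_α(J)` iff `x^α ∉ J R_F`, i.e. no multiple of `x^α` by a monomial in the
variables of `F` lies in `J`. -/
def degComplex {k : Type*} [Field k] {r : ℕ} (J : Ideal (MvPolynomial (Fin r) k))
    (α : Fin r →₀ ℕ) : Set (Finset (Fin r)) :=
  {F | ∀ γ : Fin r →₀ ℕ, (∀ i, γ i ≠ 0 → i ∈ F) → monomial (α + γ) (1 : k) ∉ J}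

/-- an ideal is unmixed if all associated primes of `R/J` have the same height. -/
def IsUnmixed {R : Type*} [CommRing R] (J : Ideal R) : Prop :=
  ∀ p ∈ associatedPrimes R (R ⧸ J), ∀ q ∈ associatedPrimes R (R ⧸ J),
    idealHeight p = idealHeight q

/-!
Expanding the cofactor along its column of ones writes it as a signed sum of `s` minors of the
matrix `(α_ij)` with one column removed. Such a minor has nonnegative entries and row sums at
most `d`, so its determinant is bounded by its permanent, hence by the product of its row sums,
which is at most `d^(s-1)`.
-/

open Finset

namespace Matrix

variable {n : Type*} [DecidableEq n] [Fintype n]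

theorem permanent_le_prod_sum {R : Type*} [CommSemiring R] [PartialOrder R] [IsOrderedRing R]
    {A : Matrix n n R} (hA : ∀ i j, 0 ≤ A i j) : A.permanent ≤ ∏ i, ∑ j, A i j := by
  have hterm : ∀ f : n → n, 0 ≤ ∏ i, A i (f i) := fun f => prod_nonneg fun i _ => hA i (f i)
  calc A.permanent = Aᵀ.permanent := (permanent_transpose A).symm
    _ = ∑ f ∈ univ.map ⟨_, DFunLike.coe_injective⟩, ∏ i, A i (f i) := by
        rw [permanent, sum_map]; rfl
    _ ≤ ∑ f : n → n, ∏ i, A i (f i) := sum_le_univ_sum_of_nonneg hterm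
    _ = ∏ i, ∑ j, A i j := (Fintype.prod_sum _).symm

variable {R : Type*} [CommRing R] [LinearOrder R] [IsStrictOrderedRing R]

theorem abs_det_le_permanent {A : Matrix n n R} (hA : ∀ i j, 0 ≤ A i j) :
    |A.det| ≤ A.permanent := by
  rw [det_apply, permanent]
  refine (abs_sum_le_sum_abs _ _).trans (le_of_eq (sum_congr rfl fun σ _ => ?_))
  have hprod : 0 ≤ ∏ i, A (σ i) i := prod_nonneg fun i _ => hA (σ i) i
  rcases Int.units_eq_one_or (Equiv.Perm.sign σ) with h | h <;> simp [h, abs_of_nonneg hprod]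

theorem abs_det_le_pow_of_sum_le {A : Matrix n n R} {c : R} (hA : ∀ i j, 0 ≤ A i j)
    (hc : ∀ i, ∑ j, A i j ≤ c) : |A.det| ≤ c ^ Fintype.card n :=
  calc |A.det| ≤ A.permanent := abs_det_le_permanent hA
    _ ≤ ∏ i, ∑ j, A i j := permanent_le_prod_sum hA
    _ ≤ ∏ _i : n, c := prod_le_prod (fun i _ => sum_nonneg fun j _ => hA i j) fun i _ => hc i
    _ = c ^ Fintype.card n := by rw [prod_const, card_univ]

theorem abs_det_submatrix_le_pow_of_sum_le {m m' : Type*} [Fintype m'] {A : Matrix m m' R}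
    {c : R} (hA : ∀ i j, 0 ≤ A i j) (hc : ∀ i, ∑ j, A i j ≤ c) (e : n → m) {f : n → m'}
    (hf : Function.Injective f) : |(A.submatrix e f).det| ≤ c ^ Fintype.card n :=
  abs_det_le_pow_of_sum_le (fun _ _ => hA _ _) fun a =>
    calc ∑ j, A (e a) (f j) = ∑ j ∈ univ.map ⟨f, hf⟩, A (e a) j :=
        (sum_map univ ⟨f, hf⟩ (A (e a))).symm
      _ ≤ ∑ j, A (e a) j := sum_le_univ_sum_of_nonneg (hA _)
      _ ≤ c := hc _

theorem abs_det_le_sum_abs_det_submatrix {m : ℕ} (M : Matrix (Fin (m + 1)) (Fin (m + 1)) R)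
    (j : Fin (m + 1)) (hj : ∀ k, |M k j| ≤ 1) :
    |M.det| ≤ ∑ k : Fin (m + 1), |(M.submatrix k.succAbove j.succAbove).det| := by
  rw [det_succ_column M j]
  refine (abs_sum_le_sum_abs _ _).trans (sum_le_sum fun k _ => ?_)
  rw [abs_mul, abs_mul, abs_neg_one_pow, one_mul]
  exact mul_le_of_le_one_left (abs_nonneg _) (hj k)

end Matrix

theorem abs_cofactor_le_general (s d : ℕ) (α : Fin s → Fin s → ℕ)
    (hsum : ∀ i, ∑ j, α i j ≤ d)
    (N : Matrix (Fin s) (Fin (s + 1)) ℝ)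
    (hN : ∀ i j, N i j = if h : (j : ℕ) < s then (α i ⟨j, h⟩ : ℝ) else 1)
    (a' : Fin s → ℝ)
    (ha' : ∀ i : Fin s, a' i = (-1 : ℝ) ^ ((i : ℕ) + 2) *
      (N.submatrix id (Fin.succAbove i.castSucc)).det) :
    ∀ i, |a' i| ≤ (s : ℝ) * (d : ℝ) ^ (s - 1) := by
  intro i
  obtain ⟨n, rfl⟩ : ∃ n, s = n + 1 := Nat.exists_eq_add_one.mpr i.pos
  set M := N.submatrix id (Fin.succAbove i.castSucc)
  have hminor : ∀ k : Fin (n + 1), M.submatrix k.succAbove (Fin.last n).succAbove =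
      (Matrix.of fun p q => (α p q : ℝ)).submatrix k.succAbove i.succAbove := fun k => by
    ext a b
    simp [M, hN, Fin.castSucc_succAbove_castSucc, Fin.is_le]
  have hminor_le : ∀ k : Fin (n + 1),
      |(M.submatrix k.succAbove (Fin.last n).succAbove).det| ≤ (d : ℝ) ^ n := fun k => by
    rw [hminor]
    simpa using Matrix.abs_det_submatrix_le_pow_of_sum_le (c := (d : ℝ))
      (A := Matrix.of fun p q => (α p q : ℝ)) (fun _ _ => Nat.cast_nonneg _)
      (fun p => by simp only [Matrix.of_apply]; exact_mod_cast hsum p) k.succAbove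
      (Fin.succAbove_right_injective (p := i))
  rw [ha', abs_mul, abs_neg_one_pow, one_mul]
  calc |M.det| ≤ ∑ k, |(M.submatrix k.succAbove (Fin.last n).succAbove).det| :=
        M.abs_det_le_sum_abs_det_submatrix (Fin.last n) fun k => by simp [M, hN]
    _ ≤ ∑ _k : Fin (n + 1), (d : ℝ) ^ n := sum_le_sum fun k _ => hminor_le k
    _ = ((n + 1 : ℕ) : ℝ) * (d : ℝ) ^ (n + 1 - 1) := by simp

/-- bound on the cofactors of the defining equation of the hyperplane through
`s` affinely independent lattice points of coordinate sum at most `d`. The `(1,i)`-cofactor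
`a'_i` of the `(s+1)×(s+1)` determinant (first row `(x_1,...,x_s,1)`, remaining rows
`(α_{i1},...,α_{is},1)`) satisfies `|a'_i| ≤ s·d^(s-1)`. -/
theorem abs_cofactor_le (s d : ℕ) (hd : 1 ≤ d) (α : Fin s → Fin s → ℕ)
    (hsum : ∀ i, ∑ j, α i j ≤ d)
    (haff : AffineIndependent ℝ (fun i : Fin s => (fun j => (α i j : ℝ) : Fin s → ℝ)))
    (N : Matrix (Fin s) (Fin (s + 1)) ℝ)
    (hN : ∀ i j, N i j = if h : (j : ℕ) < s then (α i ⟨j, h⟩ : ℝ) else 1)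
    (a' : Fin s → ℝ)
    (ha' : ∀ i : Fin s, a' i = (-1 : ℝ) ^ ((i : ℕ) + 2) *
      (N.submatrix id (Fin.succAbove i.castSucc)).det) :
    ∀ i, |a' i| ≤ (s : ℝ) * (d : ℝ) ^ (s - 1) :=
  abs_cofactor_le_general s d α hsum N hN a' ha'
end

section
/- Let I be a monomial ideal in R = k[x_1,...,x_r] and F ⊆ [r]. Let I[F] ⊆ R[F] = k[x_i : i ∉ F] be the ideal obtained from I by setting x_i = 1 for all i ∈ F. Then for every n ≥ 1, the integral closure commutes with this restriction: \overline{I^n}[F] = \overline{I[F]^n}. -/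
open MvPolynomial Pointwise

open Classical in
/-- the restriction map `R → R[F] = k[x_i : i ∉ F]` setting `x_i = 1` for `i ∈ F`. -/
noncomputable def restrictMap (k : Type*) [Field k] (r : ℕ) (F : Set (Fin r)) :
    MvPolynomial (Fin r) k →ₐ[k] MvPolynomial {i : Fin r // i ∉ F} k :=
  aeval (fun i => if h : i ∈ F then 1 else X ⟨i, h⟩)

/-!
Setting `x_i = 1` for `i ∈ F` has the section `ι : k[x_i : i ∉ F] → k[x_1, …, x_r]`, and on
a monomial `m` it only deletes the factor `u = ∏_{i ∈ F} x_i^{a_i}`, so `m = u · ι(m[F])` with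
`u[F] = 1`. Hence every `z ∈ I[F]`, and then every `z ∈ I[F]^n`, satisfies `u · ι(z) ∈ I^n`
for some `u` with `u[F] = 1`. Given an integral equation of `y` over `I[F]^n`, clear these factors with a
common `u`: `u · ι(y)` is integral over `I^n` and restricts to `y`. The other inclusion holds
because any ring map carries integral equations over `I^n` to integral equations over `I^n[F]`.
-/

open Finset

section IntegralOverIdeal

variable {R S : Type*} [CommRing R] [CommRing S]

/-- `IsIntClosure I J` unfolds to `∀ x, x ∈ J ↔ IsIntegralOverIdeal I x`. -/
def IsIntegralOverIdeal (I : Ideal R) (x : R) : Prop :=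
  ∃ n : ℕ, 0 < n ∧ ∃ a : ℕ → R, (∀ i, a i ∈ I ^ i) ∧
    x ^ n + ∑ i ∈ Icc 1 n, a i * x ^ (n - i) = 0

theorem IsIntegralOverIdeal.of_mem_Icc {I : Ideal R} {x : R} {n : ℕ} (hn : 0 < n) (a : ℕ → R)
    (ha : ∀ i ∈ Icc 1 n, a i ∈ I ^ i) (h : x ^ n + ∑ i ∈ Icc 1 n, a i * x ^ (n - i) = 0) :
    IsIntegralOverIdeal I x := by
  refine ⟨n, hn, fun i => if i ∈ Icc 1 n then a i else 0, fun i => ?_, ?_⟩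
  · dsimp only
    split_ifs with hi
    exacts [ha i hi, zero_mem _]
  · refine Eq.trans ?_ h
    congr 1
    exact sum_congr rfl fun i hi => by simp only [if_pos hi]

theorem IsIntegralOverIdeal.map {F : Type*} [FunLike F R S] [RingHomClass F R S] (f : F)
    {I : Ideal R} {x : R} (h : IsIntegralOverIdeal I x) : IsIntegralOverIdeal (I.map f) (f x) := by
  obtain ⟨n, hn, a, ha, hrel⟩ := h
  refine ⟨n, hn, fun i => f (a i), fun i => ?_, ?_⟩
  · rw [← Ideal.map_pow]
    exact Ideal.mem_map_of_mem f (ha i)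
  · simpa using congrArg f hrel

theorem mul_pow_add_sum_pow_mul_mul_pow (u x : R) (b : ℕ → R) (n : ℕ) :
    (u * x) ^ n + ∑ i ∈ Icc 1 n, u ^ i * b i * (u * x) ^ (n - i) =
      u ^ n * (x ^ n + ∑ i ∈ Icc 1 n, b i * x ^ (n - i)) := by
  rw [mul_add, mul_sum, mul_pow]
  congr 1
  refine sum_congr rfl fun i hi => ?_
  rw [mul_pow, ← pow_sub_mul_pow u (mem_Icc.1 hi).2]
  ring

end IntegralOverIdeal

section Saturation

variable {R S : Type*} [CommRing R] [CommRing S]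

/-- Taken through the localization `R_M`, so that it is an ideal for free; the elements are
described by `Ideal.mem_saturation`. -/
noncomputable def Ideal.saturation (M : Submonoid R) (I : Ideal R) : Ideal R :=
  (I.map (algebraMap R (Localization M))).comap (algebraMap R (Localization M))

theorem Ideal.mem_saturation {M : Submonoid R} {I : Ideal R} {x : R} :
    x ∈ I.saturation M ↔ ∃ u ∈ M, u * x ∈ I :=
  IsLocalization.algebraMap_mem_map_algebraMap_iff M _ I x

theorem Ideal.saturation_pow_le (M : Submonoid R) (I : Ideal R) (n : ℕ) :
    I.saturation M ^ n ≤ (I ^ n).saturation M := by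
  rw [Ideal.saturation, Ideal.saturation, Ideal.map_pow]
  exact Ideal.le_comap_pow _ n

variable {F : Type*} [FunLike F S R] [RingHomClass F S R]

theorem Ideal.pow_le_comap_saturation_pow {M : Submonoid R} {ι : F} {I : Ideal R}
    {K : Ideal S} (hK : K ≤ (I.saturation M).comap ι) (n : ℕ) :
    K ^ n ≤ ((I ^ n).saturation M).comap ι :=
  (Ideal.pow_right_mono hK n).trans <|
    (Ideal.le_comap_pow ι n).trans (Ideal.comap_mono (Ideal.saturation_pow_le M I n))

theorem IsIntegralOverIdeal.exists_mem_submonoid {M : Submonoid R} {ι : F} {I : Ideal R}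
    {K : Ideal S} (hK : K ≤ (I.saturation M).comap ι) {y : S} (hy : IsIntegralOverIdeal K y) :
    ∃ u ∈ M, IsIntegralOverIdeal I (u * ι y) := by
  obtain ⟨n, hn, a, ha, hrel⟩ := hy
  choose u huM hu using fun i =>
    Ideal.mem_saturation.1 (Ideal.pow_le_comap_saturation_pow hK i (ha i))
  set v := ∏ i ∈ Icc 1 n, u i
  refine ⟨v, prod_mem fun i _ => huM i, .of_mem_Icc hn (fun i => v ^ i * ι (a i)) ?_ ?_⟩
  · intro i hi
    obtain ⟨w, hw⟩ : u i ∣ v ^ i :=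
      dvd_pow (dvd_prod_of_mem u hi) (by have := (mem_Icc.1 hi).1; omega)
    rw [hw, mul_right_comm]
    exact Ideal.mul_mem_right _ _ (hu i)
  · have hι : ι (y ^ n + ∑ i ∈ Icc 1 n, a i * y ^ (n - i)) = 0 := by rw [hrel, map_zero]
    simp only [map_add, map_sum, map_mul, map_pow] at hι
    rw [mul_pow_add_sum_pow_mul_mul_pow, hι, mul_zero]

end Saturation

section Restriction

variable {k : Type*} [Field k] {r : ℕ} (F : Set (Fin r))

theorem restrictMap_rename_val (p : MvPolynomial {i : Fin r // i ∉ F} k) :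
    restrictMap k r F (rename Subtype.val p) = p := by
  suffices h : (restrictMap k r F).comp (rename Subtype.val) = AlgHom.id k _ from
    DFunLike.congr_fun h p
  refine algHom_ext fun j => ?_
  simp [restrictMap, j.prop]

theorem exists_restrictMap_eq_one_mul_rename_restrictMap (a : Fin r →₀ ℕ) :
    ∃ u ∈ MonoidHom.mker (restrictMap k r F),
      u * rename Subtype.val (restrictMap k r F (monomial a 1)) = monomial a 1 := by
  suffices h : ∀ p ∈ Submonoid.closure (Set.range X),
      ∃ u ∈ MonoidHom.mker (restrictMap k r F),
        u * rename Subtype.val (restrictMap k r F p) = p by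
    refine h _ ?_
    rw [← prod_X_pow_eq_monomial]
    exact prod_mem fun i _ => pow_mem (Submonoid.subset_closure (Set.mem_range_self i)) _
  intro p hp
  induction hp using Submonoid.closure_induction with
  | mem _ hx =>
    obtain ⟨i, rfl⟩ := hx
    by_cases hi : i ∈ F
    · exact ⟨X i, by simp [restrictMap, hi], by simp [restrictMap, hi]⟩
    · exact ⟨1, one_mem _, by simp [restrictMap, hi]⟩
  | one => exact ⟨1, one_mem _, by simp⟩
  | mul p q _ _ hp hq =>
    obtain ⟨u, hu, hup⟩ := hp
    obtain ⟨v, hv, hvq⟩ := hq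
    refine ⟨u * v, mul_mem hu hv, ?_⟩
    rw [map_mul, map_mul]
    conv_rhs => rw [← hup, ← hvq]
    ring

theorem map_restrictMap_le_comap_saturation {I : Ideal (MvPolynomial (Fin r) k)}
    (hI : IsMonomialIdeal I) :
    I.map (restrictMap k r F) ≤
      (I.saturation (MonoidHom.mker (restrictMap k r F))).comap (rename Subtype.val) := by
  obtain ⟨S, rfl⟩ := hI
  rw [Ideal.map_span, Ideal.span_le]
  rintro _ ⟨_, ⟨a, ha, rfl⟩, rfl⟩
  obtain ⟨u, hu, hmul⟩ := exists_restrictMap_eq_one_mul_rename_restrictMap (k := k) F a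
  exact Ideal.mem_saturation.2 ⟨u, hu, hmul ▸ Ideal.subset_span ⟨a, ha, rfl⟩⟩

end Restriction

theorem intClosure_restrict_general {k : Type*} [Field k] {r : ℕ}
    (I : Ideal (MvPolynomial (Fin r) k)) (hI : IsMonomialIdeal I)
    (F : Set (Fin r)) (n : ℕ)
    (J : Ideal (MvPolynomial (Fin r) k)) (hJ : IsIntClosure (I ^ n) J)
    (J' : Ideal (MvPolynomial {i : Fin r // i ∉ F} k))
    (hJ' : IsIntClosure ((Ideal.map (restrictMap k r F) I) ^ n) J') :
    Ideal.map (restrictMap k r F) J = J' := by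
  refine le_antisymm (Ideal.map_le_iff_le_comap.2 fun x hx => ?_) fun y hy => ?_
  · have hx' := IsIntegralOverIdeal.map (restrictMap k r F) ((hJ x).1 hx)
    rw [Ideal.map_pow] at hx'
    exact (hJ' _).2 hx'
  · obtain ⟨u, hu, hint⟩ := IsIntegralOverIdeal.exists_mem_submonoid
      (Ideal.pow_le_comap_saturation_pow (map_restrictMap_le_comap_saturation F hI) n)
      ((hJ' y).1 hy)
    have hrestrict : restrictMap k r F (u * rename Subtype.val y) = y := by
      rw [map_mul, MonoidHom.mem_mker.1 hu, one_mul, restrictMap_rename_val]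
    exact hrestrict ▸ Ideal.mem_map_of_mem _ ((hJ _).2 hint)

/-- integral closure commutes with the restriction `I ↦ I[F]`:
`\overline{I^n}[F] = \overline{I[F]^n}`. -/
theorem intClosure_restrict {k : Type*} [Field k] {r : ℕ}
    (I : Ideal (MvPolynomial (Fin r) k)) (hI : IsMonomialIdeal I)
    (F : Set (Fin r)) (n : ℕ) (hn : 1 ≤ n)
    (J : Ideal (MvPolynomial (Fin r) k)) (hJ : IsIntClosure (I ^ n) J)
    (J' : Ideal (MvPolynomial {i : Fin r // i ∉ F} k))
    (hJ' : IsIntClosure ((Ideal.map (restrictMap k r F) I) ^ n) J') :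
    Ideal.map (restrictMap k r F) J = J' :=
  intClosure_restrict_general I hI F n J hJ J' hJ'
end

section
/- Let I be an unmixed monomial ideal in R = k[x_1,...,x_r] with irredundant primary decomposition I = Q_1 ∩ ... ∩ Q_s into monomial primary ideals. If \overline{I^n} is unmixed for some n ≥ 1, then \overline{I^n} = \overline{Q_1^n} ∩ ... ∩ \overline{Q_s^n}. -/
open MvPolynomial Pointwise

/-!
The inclusion `\overline{I^n} ⊆ ⋂ \overline{Q_i^n}` is monotonicity of integral closure. Conversely,
let `x` lie in every `\overline{Q_i^n}` but not in `J = \overline{I^n}`, and let `p` be an associated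
prime of `R/J` containing `J : x`. Unmixedness of `J` forces `p` to be a minimal prime of `J`; since
`√J = √I = ⋂ √Q_i`, the prime `p` contains exactly one `Q_{i₀}` (with `√Q_{i₀} = p`), so some
`t ∈ ∏_{j ≠ i₀} Q_j^n` avoids `p`. But `t x` is integral over `(∏ Q_j)^n ⊆ I^n`, i.e. `t ∈ J : x ⊆ p`.
-/

section IntClosure

variable {R : Type*} [CommRing R] {I I' J J' K : Ideal R}

theorem IsIntClosure.le_of_le (hJ : IsIntClosure I J) (hJ' : IsIntClosure I' J') (h : I ≤ I') :
    J ≤ J' := fun x hx => by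
  obtain ⟨m, hm, a, ha, heq⟩ := (hJ x).mp hx
  exact (hJ' x).mpr ⟨m, hm, a, fun l => Ideal.pow_right_mono h l (ha l), heq⟩

theorem IsIntClosure.self_le (hJ : IsIntClosure I J) : I ≤ J := fun z hz =>
  (hJ z).mpr ⟨1, one_pos, fun l => if l = 1 then -z else 0,
    fun l => by dsimp only; split_ifs with hl <;> simp [hl, hz], by simp⟩

theorem IsIntClosure.le_radical (hJ : IsIntClosure I J) : J ≤ I.radical := fun z hz => by
  obtain ⟨m, -, a, ha, heq⟩ := (hJ z).mp hz
  refine ⟨m, ?_⟩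
  rw [eq_neg_of_add_eq_zero_left heq]
  refine neg_mem (Submodule.sum_mem _ fun l hl => Ideal.mul_mem_right _ _ ?_)
  exact Ideal.pow_le_self (Nat.one_le_iff_ne_zero.mp (Finset.mem_Icc.mp hl).1) (ha l)

theorem IsIntClosure.mul_mem (hJ : IsIntClosure I J) (hJ' : IsIntClosure I' J')
    (hK : K * I' ≤ I) {t x : R} (ht : t ∈ K) (hx : x ∈ J') : t * x ∈ J := by
  obtain ⟨m, hm, a, ha, heq⟩ := (hJ' x).mp hx
  refine (hJ _).mpr ⟨m, hm, fun l => t ^ l * a l, fun l => ?_, ?_⟩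
  · exact Ideal.pow_right_mono hK l
      (mul_pow K I' l ▸ Ideal.mul_mem_mul (Ideal.pow_mem_pow ht l) (ha l))
  · have hterm : ∀ l ∈ Finset.Icc 1 m,
        t ^ l * a l * (t * x) ^ (m - l) = t ^ m * (a l * x ^ (m - l)) := fun l hl => by
      obtain ⟨d, rfl⟩ := Nat.exists_eq_add_of_le (Finset.mem_Icc.mp hl).2
      rw [Nat.add_sub_cancel_left]
      ring
    rw [Finset.sum_congr rfl hterm, ← Finset.mul_sum, mul_pow, ← mul_add, heq, mul_zero]

end IntClosure

section Unmixed

variable {R : Type*} [CommRing R] {J : Ideal R}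

theorem exists_mem_associatedPrimes_forall_mul_mem [IsNoetherianRing R] {x : R} (hx : x ∉ J) :
    ∃ p ∈ associatedPrimes R (R ⧸ J), ∀ z, z * x ∈ J → z ∈ p := by
  obtain ⟨p, hp, hle⟩ := exists_le_isAssociatedPrime_of_isNoetherianRing R
    (Ideal.Quotient.mk J x) (by rwa [ne_eq, Ideal.Quotient.eq_zero_iff_mem])
  refine ⟨p, hp, fun z hz => hle ?_⟩
  rw [Submodule.mem_colon_singleton, Submodule.mem_bot]
  exact Ideal.Quotient.eq_zero_iff_mem.mpr hz

theorem idealHeight_eq_height (p : Ideal R) [hp : p.IsPrime] : idealHeight p = p.height :=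
  (le_antisymm (iInf₂_le (⟨p, hp⟩ : PrimeSpectrum R) le_rfl)
    (le_iInf₂ fun _ hq => Order.height_mono hq)).trans
    (PrimeSpectrum.height_eq_orderHeight ⟨p, hp⟩).symm

theorem IsUnmixed.mem_minimalPrimes [IsNoetherianRing R] (hJ : IsUnmixed J) {p : Ideal R}
    (hp : p ∈ associatedPrimes R (R ⧸ J)) : p ∈ J.minimalPrimes := by
  have := hp.isPrime
  have hJp : J ≤ p := by
    rw [← Ideal.annihilator_quotient (I := J), ← Submodule.annihilator_top]
    exact hp.annihilator_le
  obtain ⟨q, hq, hqp⟩ := Ideal.exists_minimalPrimes_le hJp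
  have hqAss : q ∈ associatedPrimes R (R ⧸ J) :=
    Module.associatedPrimes.minimalPrimes_annihilator_subset_associatedPrimes R (R ⧸ J)
      (by rwa [Ideal.annihilator_quotient])
  obtain rfl | hlt := hqp.eq_or_lt
  · exact hq
  · have := hq.isPrime
    have hheight := Ideal.height_strict_mono_of_isPrime hlt
    rw [← idealHeight_eq_height, ← idealHeight_eq_height, hJ q hqAss p hp] at hheight
    exact absurd hheight (lt_irrefl _)

end Unmixed

theorem Ideal.IsPrimary.radical_eq_of_mem_minimalPrimes {R : Type*} [CommRing R]
    {Q J p : Ideal R} (hQ : Q.IsPrimary) (hp : p ∈ J.minimalPrimes) (hJQ : J ≤ Q.radical)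
    (hQp : Q ≤ p) : Q.radical = p :=
  le_antisymm (hp.1.1.radical_le_iff.mpr hQp)
    (hp.2 ⟨Ideal.isPrime_radical hQ, hJQ⟩ (hp.1.1.radical_le_iff.mpr hQp))

theorem intClosure_pow_of_unmixed_primary_decomposition_general {k : Type*} [Field k] {r : ℕ}
    (I : Ideal (MvPolynomial (Fin r) k))
    (s : ℕ) (Q : Fin s → Ideal (MvPolynomial (Fin r) k))
    (hQprimary : ∀ i, (Q i).IsPrimary)
    (hdecomp : I = ⨅ i, Q i)
    (hirred₁ : ∀ i j, i ≠ j → (Q i).radical ≠ (Q j).radical)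
    (n : ℕ) (hn : 1 ≤ n)
    (J : Ideal (MvPolynomial (Fin r) k)) (hJ : IsIntClosure (I ^ n) J)
    (hJunmixed : IsUnmixed J)
    (JQ : Fin s → Ideal (MvPolynomial (Fin r) k))
    (hJQ : ∀ i, IsIntClosure ((Q i) ^ n) (JQ i)) :
    J = ⨅ i, JQ i := by
  have hIQ : ∀ i, I ≤ Q i := fun i => hdecomp ▸ iInf_le Q i
  have hprod : ∏ i, Q i ≤ I := hdecomp ▸ Ideal.prod_le_inf.trans (by simp [Finset.inf_eq_iInf])
  refine le_antisymm (le_iInf fun i => hJ.le_of_le (hJQ i) (Ideal.pow_right_mono (hIQ i) n)) ?_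
  intro x hx
  by_contra hxJ
  obtain ⟨p, hpAss, hp⟩ := exists_mem_associatedPrimes_forall_mul_mem hxJ
  have hpmin := hJunmixed.mem_minimalPrimes hpAss
  have hpprime := hpmin.1.1
  have hJrad : ∀ i, J ≤ (Q i).radical := fun i =>
    hJ.le_radical.trans ((Ideal.radical_pow I (by omega)).trans_le (Ideal.radical_mono (hIQ i)))
  obtain ⟨i₀, -, hi₀⟩ :=
    hpprime.prod_le.mp (hprod.trans (hpprime.le_of_pow_le (hJ.self_le.trans hpmin.1.2)))
  have hunique : ∀ j ≠ i₀, ¬ Q j ≤ p := fun j hj hjp =>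
    hirred₁ j i₀ hj (((hQprimary j).radical_eq_of_mem_minimalPrimes hpmin (hJrad j) hjp).trans
      ((hQprimary i₀).radical_eq_of_mem_minimalPrimes hpmin (hJrad i₀) hi₀).symm)
  obtain ⟨t, ht, htp⟩ : ∃ t ∈ ∏ j ∈ Finset.univ.erase i₀, Q j ^ n, t ∉ p :=
    SetLike.not_le_iff_exists.mp fun hle => by
      obtain ⟨j, hj, hjp⟩ := hpprime.prod_le.mp hle
      exact hunique j (Finset.ne_of_mem_erase hj) (hpprime.le_of_pow_le hjp)
  have hK : (∏ j ∈ Finset.univ.erase i₀, Q j ^ n) * Q i₀ ^ n ≤ I ^ n := by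
    rw [Finset.prod_erase_mul _ _ (Finset.mem_univ i₀), Finset.prod_pow]
    exact Ideal.pow_right_mono hprod n
  exact htp (hp t (hJ.mul_mem (hJQ i₀) hK ht (Ideal.mem_iInf.mp hx i₀)))

/-- if `I = Q_1 ∩ ... ∩ Q_s` is an irredundant primary decomposition of an
unmixed monomial ideal and `\overline{I^n}` is unmixed, then
`\overline{I^n} = \overline{Q_1^n} ∩ ... ∩ \overline{Q_s^n}`. -/
theorem intClosure_pow_of_unmixed_primary_decomposition {k : Type*} [Field k] {r : ℕ}
    (I : Ideal (MvPolynomial (Fin r) k)) (hI : IsMonomialIdeal I) (hunmixed : IsUnmixed I)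
    (s : ℕ) (hs : 1 ≤ s) (Q : Fin s → Ideal (MvPolynomial (Fin r) k))
    (hQmon : ∀ i, IsMonomialIdeal (Q i)) (hQprimary : ∀ i, (Q i).IsPrimary)
    (hdecomp : I = ⨅ i, Q i)
    (hirred₁ : ∀ i j, i ≠ j → (Q i).radical ≠ (Q j).radical)
    (hirred₂ : ∀ i, (⨅ j ∈ Finset.univ.erase i, Q j) ≠ I)
    (n : ℕ) (hn : 1 ≤ n)
    (J : Ideal (MvPolynomial (Fin r) k)) (hJ : IsIntClosure (I ^ n) J)
    (hJunmixed : IsUnmixed J)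
    (JQ : Fin s → Ideal (MvPolynomial (Fin r) k))
    (hJQ : ∀ i, IsIntClosure ((Q i) ^ n) (JQ i)) :
    J = ⨅ i, JQ i :=
  intClosure_pow_of_unmixed_primary_decomposition_general I s Q hQprimary hdecomp hirred₁ n hn J hJ
    hJunmixed JQ hJQ
end

section
/- Let Δ = ⟨{1},...,{s}⟩ be the 0-dimensional simplicial complex on vertex set {1,...,s} with s ≥ 3, and let I_Δ = (x_{s+1},...,x_r) + (x_i x_j : 1 ≤ i < j ≤ s) be its Stanley-Reisner ideal in R = k[x_1,...,x_r]. Then the maximal ideal m = (x_1,...,x_r) is an associated prime of R/\overline{I_Δ^2}; in particular x_1x_2x_3 ∉ \overline{I_Δ^2} and m = \overline{I_Δ^2} : (x_1x_2x_3). -/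
open MvPolynomial Pointwise

/-! Let `f = x₀x₁x₂`. For every variable `x_j`, the square `(x_j f)²` is a product of four
generators of `I_Δ`, so `x_j f` is integral over `I_Δ²` and `m ⊆ \overline{I_Δ²} : f`.
Sending the vertices to `t` and the other variables to `0` maps `I_Δ²` into `(t⁴)` and `f` to `t³`,
so an integral equation of `f` over `I_Δ²` would give `t^{3n} ∈ (t^{3n+1})`; hence `f` is not in the
integral closure, the colon ideal is proper, and it equals the maximal ideal `m`. -/

theorem IsIntClosure.mem_of_pow_mem_pow {R : Type*} [CommRing R] {I J : Ideal R}
    (hJ : IsIntClosure I J) {n : ℕ} (hn : 0 < n) {x : R} (hx : x ^ n ∈ I ^ n) : x ∈ J := by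
  refine (hJ x).2 ⟨n, hn, fun i => if i = n then -x ^ n else 0, fun i => ?_, ?_⟩
  · dsimp only
    split_ifs with h
    · subst h
      exact neg_mem hx
    · exact zero_mem _
  · simp [ite_mul, Finset.sum_ite_eq', show 1 ≤ n from hn]

open Polynomial in
theorem IsIntClosure.notMem_of_map_le_span_X_pow {R S F : Type*} [CommRing R] [CommRing S]
    [Nontrivial S] [FunLike F R S[X]] [RingHomClass F R S[X]] {I J : Ideal R}
    (hJ : IsIntClosure I J) (φ : F) {d e : ℕ} (hI : I.map φ ≤ Ideal.span {Polynomial.X ^ d})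
    (hed : e < d) {x : R} (hx : φ x = Polynomial.X ^ e) : x ∉ J := by
  intro hxJ
  obtain ⟨n, -, a, ha, hsum⟩ := (hJ x).1 hxJ
  have hterm : ∀ i ∈ Finset.Icc 1 n, Polynomial.X ^ (e * n + 1) ∣ φ (a i * x ^ (n - i)) := by
    intro i hi
    obtain ⟨hi1, hin⟩ := Finset.mem_Icc.1 hi
    have hai : Polynomial.X ^ (d * i) ∣ φ (a i) := by
      have := Ideal.pow_right_mono hI i (Ideal.map_pow φ I i ▸ Ideal.mem_map_of_mem φ (ha i))
      rwa [Ideal.span_singleton_pow, ← pow_mul, Ideal.mem_span_singleton] at this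
    have hexp : e * n + 1 ≤ d * i + e * (n - i) := by
      obtain ⟨m, rfl⟩ := Nat.exists_eq_add_of_le hin
      rw [Nat.add_sub_cancel_left]
      nlinarith
    rw [map_mul, map_pow, hx, ← pow_mul]
    calc (Polynomial.X : S[X]) ^ (e * n + 1) ∣ Polynomial.X ^ (d * i + e * (n - i)) :=
          pow_dvd_pow _ hexp
      _ = Polynomial.X ^ (d * i) * Polynomial.X ^ (e * (n - i)) := pow_add _ _ _
      _ ∣ φ (a i) * Polynomial.X ^ (e * (n - i)) := mul_dvd_mul_right hai _
  have hdvd : Polynomial.X ^ (e * n + 1) ∣ (Polynomial.X ^ (e * n) : S[X]) := by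
    have h := congrArg φ hsum
    rw [map_add, map_pow, hx, map_sum, map_zero, ← pow_mul, add_eq_zero_iff_eq_neg] at h
    exact h ▸ (Finset.dvd_sum hterm).neg_right
  simpa using (Polynomial.X_pow_dvd_iff.1 hdvd) (e * n) (Nat.lt_succ_self _)

theorem Ideal.sq_mul_mul_mul_mem_pow_four {R : Type*} [CommRing R] {I : Ideal R} {y u v w : R}
    (hyu : y * u ∈ I) (hyv : y * v ∈ I) (huw : u * w ∈ I) (hvw : v * w ∈ I) :
    (y * (u * v * w)) ^ 2 ∈ I ^ 4 := by
  have h : (y * (u * v * w)) ^ 2 = y * u * (y * v) * (u * w) * (v * w) := by ring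
  rw [h, pow_succ, pow_succ, pow_succ, pow_one]
  exact mul_mem_mul (mul_mem_mul (mul_mem_mul hyu hyv) huw) hvw

theorem Ideal.colon_span_singleton_eq_of_isMaximal {R : Type*} [CommRing R] {P J : Ideal R}
    {f : R} (hP : P.IsMaximal) (hle : P ≤ J.colon (Ideal.span {f})) (hf : f ∉ J) :
    J.colon (Ideal.span {f}) = P := by
  refine (hP.eq_of_le (fun htop => hf ?_) hle).symm
  simpa using Ideal.mem_colon_span_singleton.1 ((Ideal.eq_top_iff_one _).1 htop)

theorem Ideal.mem_associatedPrimes_quotient_of_colon_eq {R : Type*} [CommRing R] {P J : Ideal R}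
    {f : R} (hP : P.IsPrime) (h : J.colon (Ideal.span {f}) = P) :
    P ∈ associatedPrimes R (R ⧸ J) := by
  refine ⟨hP, Ideal.Quotient.mk J f, ?_⟩
  rw [← hP.radical, ← h]
  congr 1
  ext g
  rw [Submodule.mem_colon_singleton, Ideal.mem_colon_span_singleton, Submodule.mem_bot,
    Algebra.smul_def, Ideal.Quotient.algebraMap_eq, ← map_mul, Ideal.Quotient.eq_zero_iff_mem]

namespace MvPolynomial

theorem idealOfVars_eq_ker_constantCoeff {σ R : Type*} [CommSemiring R] :
    idealOfVars σ R = RingHom.ker (constantCoeff : MvPolynomial σ R →+* R) := by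
  ext p
  rw [← pow_one (idealOfVars σ R), mem_pow_idealOfVars_iff', RingHom.mem_ker, constantCoeff_eq]
  simp [Finsupp.degree_eq_zero_iff]

theorem isMaximal_idealOfVars {σ k : Type*} [Field k] : (idealOfVars σ k).IsMaximal := by
  rw [idealOfVars_eq_ker_constantCoeff]
  exact RingHom.ker_isMaximal_of_surjective _ fun c => ⟨C c, constantCoeff_C σ c⟩

end MvPolynomial

/-- The Stanley–Reisner ideal of `Δ = ⟨{0}, …, {s-1}⟩` on the vertex set `Fin r`. -/
noncomputable def isolatedVerticesIdeal (k : Type*) [CommSemiring k] (r s : ℕ) :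
    Ideal (MvPolynomial (Fin r) k) :=
  Ideal.span ({f | ∃ i : Fin r, s ≤ (i : ℕ) ∧ f = X i} ∪
    {f | ∃ i j : Fin r, (i : ℕ) < (j : ℕ) ∧ (j : ℕ) < s ∧ f = X i * X j})

noncomputable def collapseVertices (k : Type*) [CommSemiring k] (r s : ℕ) :
    MvPolynomial (Fin r) k →ₐ[k] Polynomial k :=
  aeval fun i => if (i : ℕ) < s then Polynomial.X else 0

namespace isolatedVerticesIdeal

variable {k : Type*} [CommRing k] {r s : ℕ}

theorem X_mul_X_mem {i j : Fin r} (hij : i ≠ j) (hj : (j : ℕ) < s) :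
    X i * X j ∈ isolatedVerticesIdeal k r s := by
  by_cases hi : (i : ℕ) < s
  · rcases Fin.lt_or_lt_of_ne hij with h | h
    · exact Ideal.subset_span (Or.inr ⟨i, j, h, hj, rfl⟩)
    · rw [mul_comm]
      exact Ideal.subset_span (Or.inr ⟨j, i, h, hi, rfl⟩)
  · exact Ideal.mul_mem_right _ _ (Ideal.subset_span (Or.inl ⟨i, not_lt.1 hi, rfl⟩))

theorem map_collapseVertices_le :
    (isolatedVerticesIdeal k r s).map (collapseVertices k r s) ≤
      Ideal.span {Polynomial.X ^ 2} := by
  rw [isolatedVerticesIdeal, Ideal.map_span, Ideal.span_le]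
  rintro _ ⟨_, ⟨i, hi, rfl⟩ | ⟨i, j, hij, hj, rfl⟩, rfl⟩
  · simp [collapseVertices, not_lt.2 hi]
  · simp [collapseVertices, hj, hij.trans hj, ← pow_two]

variable {J : Ideal (MvPolynomial (Fin r) k)} {a b c : Fin r}

theorem X_mul_mem_of_ne (hJ : IsIntClosure (isolatedVerticesIdeal k r s ^ 2) J)
    (ha : (a : ℕ) < s) (hb : (b : ℕ) < s) (hc : (c : ℕ) < s) {j : Fin r}
    (hja : j ≠ a) (hjb : j ≠ b) (hac : a ≠ c) (hbc : b ≠ c) :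
    X j * (X a * X b * X c) ∈ J := by
  refine hJ.mem_of_pow_mem_pow two_pos ?_
  rw [← pow_mul]
  exact Ideal.sq_mul_mul_mul_mem_pow_four (X_mul_X_mem hja ha) (X_mul_X_mem hjb hb)
    (X_mul_X_mem hac hc) (X_mul_X_mem hbc hc)

theorem idealOfVars_le_colon (hJ : IsIntClosure (isolatedVerticesIdeal k r s ^ 2) J)
    (ha : (a : ℕ) < s) (hb : (b : ℕ) < s) (hc : (c : ℕ) < s)
    (hab : a ≠ b) (hac : a ≠ c) (hbc : b ≠ c) :
    idealOfVars (Fin r) k ≤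
      J.colon (Ideal.span {(X a * X b * X c : MvPolynomial (Fin r) k)}) := by
  refine Ideal.span_le.2 (Set.range_subset_iff.2 fun j => Ideal.mem_colon_span_singleton.2 ?_)
  by_cases hja : j = a
  · subst hja
    rw [show X j * X b * X c = X b * X c * X j by ring]
    exact X_mul_mem_of_ne hJ hb hc ha hab hac hab.symm hac.symm
  by_cases hjb : j = b
  · subst hjb
    rw [show X a * X j * X c = X a * X c * X j by ring]
    exact X_mul_mem_of_ne hJ ha hc hb hja hbc hab hbc.symm
  exact X_mul_mem_of_ne hJ ha hb hc hja hjb hac hbc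

theorem X_mul_X_mul_X_notMem [Nontrivial k]
    (hJ : IsIntClosure (isolatedVerticesIdeal k r s ^ 2) J)
    (ha : (a : ℕ) < s) (hb : (b : ℕ) < s) (hc : (c : ℕ) < s) :
    X a * X b * X c ∉ J := by
  refine hJ.notMem_of_map_le_span_X_pow (collapseVertices k r s) (d := 4) (e := 3) ?_
    (by norm_num) ?_
  · rw [Ideal.map_pow]
    refine (Ideal.pow_right_mono map_collapseVertices_le 2).trans ?_
    rw [Ideal.span_singleton_pow, ← pow_mul]
  · simp [collapseVertices, ha, hb, hc, pow_succ]

end isolatedVerticesIdeal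

/-- for `Δ = ⟨{1},...,{s}⟩` with `s ≥ 3` and
`I_Δ = (x_{s+1},...,x_r) + (x_i x_j : 1 ≤ i < j ≤ s)`, the maximal ideal is an associated
prime of `R/\overline{I_Δ^2}`; in particular `x_1x_2x_3 ∉ \overline{I_Δ^2}` and
`m = \overline{I_Δ^2} : (x_1x_2x_3)`. -/
theorem maxIdeal_mem_ass_intClosure_sq {k : Type*} [Field k] (r s : ℕ)
    (hs : 3 ≤ s) (hsr : s ≤ r)
    (I : Ideal (MvPolynomial (Fin r) k))
    (hIdef : I = Ideal.span
      ({f | ∃ i : Fin r, s ≤ (i : ℕ) ∧ f = X i} ∪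
       {f | ∃ i j : Fin r, (i : ℕ) < (j : ℕ) ∧ (j : ℕ) < s ∧ f = X i * X j}))
    (J : Ideal (MvPolynomial (Fin r) k)) (hJ : IsIntClosure (I ^ 2) J) :
    maxIdeal k (Fin r) ∈
      associatedPrimes (MvPolynomial (Fin r) k) (MvPolynomial (Fin r) k ⧸ J) ∧
    (X ⟨0, by omega⟩ * X ⟨1, by omega⟩ * X ⟨2, by omega⟩ : MvPolynomial (Fin r) k) ∉ J ∧
    J.colon (Ideal.span
        {(X ⟨0, by omega⟩ * X ⟨1, by omega⟩ * X ⟨2, by omega⟩ : MvPolynomial (Fin r) k)}) =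
      maxIdeal k (Fin r) := by
  obtain rfl : I = isolatedVerticesIdeal k r s := hIdef
  have h0 : ((⟨0, by omega⟩ : Fin r) : ℕ) < s := show 0 < s by omega
  have h1 : ((⟨1, by omega⟩ : Fin r) : ℕ) < s := show 1 < s by omega
  have h2 : ((⟨2, by omega⟩ : Fin r) : ℕ) < s := show 2 < s by omega
  have hf := isolatedVerticesIdeal.X_mul_X_mul_X_notMem hJ h0 h1 h2
  have hcolon := Ideal.colon_span_singleton_eq_of_isMaximal isMaximal_idealOfVars
    (isolatedVerticesIdeal.idealOfVars_le_colon hJ h0 h1 h2 (by simp) (by simp) (by simp)) hf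
  exact ⟨Ideal.mem_associatedPrimes_quotient_of_colon_eq isMaximal_idealOfVars.isPrime hcolon,
    hf, hcolon⟩
end

section
/- Let Δ be a 0-dimensional simplicial complex (all facets are single vertices) and suppose \overline{I_Δ^n} is Cohen-Macaulay for some n ≥ 2, where I_Δ is the Stanley-Reisner ideal in R = k[x_1,...,x_r]. Then I_Δ is a complete intersection; moreover Δ has at most two vertices. -/
/-!
Suppose `Δ` has three vertices `p, q, t` and write `n = m + 2`. Give the vertices weight `1` and
all other variables weight `2`; every non-face then has weight at least `2`, so `I_Δ^n` lives in
weights `≥ 2n`. A nonzero weighted-homogeneous `u` of weight `d < 2n` is then not integral over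
`I_Δ^n`: in `u^N + a_1 u^(N-1) + ... = 0` the term `u^N` has weight `Nd`, all others weight `> Nd`.
So `u = x_p^(m+1) x_q^(m+1) x_t`, of weight `2n - 1`, is not in `J`. On the other hand, since all
edges `x_i x_j` lie in `I_Δ`, each `x_a u` factors as `(x_a x_p)(x_q x_t)(x_p x_q)^m ∈ I_Δ^n`
(or the same with `p, q` swapped). So the maximal ideal kills `u` in `R/J` and `depth R/J = 0`,
while `J` lies in the kernel of `x_p ↦ X`, `x_j ↦ 0` onto `k[X]`, so `dim R/J ≥ 1`.
Once there are at most two vertices, two distinct minimal non-faces `F, G` sharing a non-vertex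
`i` would both be `{i}`; sharing a vertex `i`, the set `F ∪ G` consists of vertices and strictly
contains `F`, so `F` would be the face `{i}`.
-/

open MvPolynomial Pointwise

namespace MvPolynomial

variable {R σ : Type*} [CommSemiring R]

def weightFiltration (R : Type*) [CommSemiring R] (w : σ → ℕ) (c : ℕ) :
    Ideal (MvPolynomial σ R) where
  carrier := {f | ∀ d ∈ f.support, c ≤ Finsupp.weight w d}
  add_mem' := by
    classical
    intro f g hf hg d hd
    rcases Finset.mem_union.mp (support_add hd) with h | h
    exacts [hf d h, hg d h]
  zero_mem' := by simp
  smul_mem' := by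
    classical
    intro g f hf d hd
    obtain ⟨a, -, b, hb, rfl⟩ := Finset.mem_add.mp (support_mul g f hd)
    rw [map_add]
    exact le_add_left (hf b hb)

theorem weightFiltration_antitone (w : σ → ℕ) : Antitone (weightFiltration R w) :=
  fun _ _ h _ hf d hd => h.trans (hf d hd)

theorem weightFiltration_mul_le (w : σ → ℕ) (c d : ℕ) :
    weightFiltration R w c * weightFiltration R w d ≤ weightFiltration R w (c + d) := by
  classical
  refine Ideal.mul_le.mpr fun f hf g hg _ he => ?_
  obtain ⟨a, ha, b, hb, rfl⟩ := Finset.mem_add.mp (support_mul f g he)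
  rw [map_add]
  exact add_le_add (hf a ha) (hg b hb)

theorem pow_le_weightFiltration {w : σ → ℕ} {c : ℕ} {I : Ideal (MvPolynomial σ R)}
    (h : I ≤ weightFiltration R w c) (m : ℕ) : I ^ m ≤ weightFiltration R w (m * c) := by
  induction m with
  | zero => exact fun f _ d _ => by simp
  | succ m ih =>
    calc I ^ (m + 1) = I ^ m * I := pow_succ I m
      _ ≤ weightFiltration R w (m * c) * weightFiltration R w c := Ideal.mul_mono ih h
      _ ≤ weightFiltration R w ((m + 1) * c) := by
        rw [Nat.succ_mul]; exact weightFiltration_mul_le w _ _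

theorem IsWeightedHomogeneous.mem_weightFiltration {w : σ → ℕ} {d : ℕ} {φ : MvPolynomial σ R}
    (hφ : IsWeightedHomogeneous w φ d) : φ ∈ weightFiltration R w d :=
  fun _ he => (hφ (mem_support_iff.mp he)).ge

theorem IsWeightedHomogeneous.notMem_weightFiltration {w : σ → ℕ} {c d : ℕ}
    {φ : MvPolynomial σ R} (hφ : IsWeightedHomogeneous w φ d) (hφ0 : φ ≠ 0) (hdc : d < c) :
    φ ∉ weightFiltration R w c := by
  intro h
  obtain ⟨e, he⟩ := support_nonempty.mpr hφ0
  have := h e he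
  rw [hφ (mem_support_iff.mp he)] at this
  omega

end MvPolynomial

namespace IsIntClosure

variable {A : Type*} [CommRing A] {I J : Ideal A}

theorem le (hJ : IsIntClosure I J) : I ≤ J := by
  intro x hx
  refine (hJ x).mpr ⟨1, one_pos, fun i => if i = 1 then -x else 0, fun i => ?_, by simp⟩
  dsimp only
  split_ifs with hi
  · subst hi; simpa using hx
  · exact zero_mem _

theorem exists_pow_mem (hJ : IsIntClosure I J) {x : A} (hx : x ∈ J) {L : ℕ → Ideal A}
    (hL : ∀ m i, 1 ≤ i → i ≤ m → ∀ a ∈ I ^ i, a * x ^ (m - i) ∈ L m) :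
    ∃ m, 0 < m ∧ x ^ m ∈ L m := by
  obtain ⟨m, hm, a, ha, heq⟩ := (hJ x).mp hx
  refine ⟨m, hm, ?_⟩
  rw [eq_neg_of_add_eq_zero_left heq]
  refine neg_mem (Ideal.sum_mem _ fun i hi => ?_)
  obtain ⟨hi1, him⟩ := Finset.mem_Icc.mp hi
  exact hL m i hi1 him _ (ha i)

theorem le_of_le_isPrime (hJ : IsIntClosure I J) {P : Ideal A} (hP : P.IsPrime) (hI : I ≤ P) :
    J ≤ P := by
  intro x hx
  obtain ⟨m, -, hxm⟩ := hJ.exists_pow_mem hx (L := fun _ => P)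
    fun m i hi _ a ha => P.mul_mem_right _ (hI (Ideal.pow_le_self (by omega) ha))
  exact hP.mem_of_pow_mem m hxm

theorem notMem_of_isWeightedHomogeneous {k σ : Type*} [CommRing k] [IsDomain k]
    {I J : Ideal (MvPolynomial σ k)} (hJ : IsIntClosure I J) {w : σ → ℕ} {c d : ℕ}
    (hI : I ≤ weightFiltration k w c) {u : MvPolynomial σ k} (hu : IsWeightedHomogeneous w u d)
    (hu0 : u ≠ 0) (hdc : d < c) : u ∉ J := by
  intro huJ
  obtain ⟨m, -, hum⟩ := hJ.exists_pow_mem huJ (L := fun m => weightFiltration k w (m * d + 1))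
    fun m i hi him a ha => by
      refine weightFiltration_antitone w ?_ (weightFiltration_mul_le w _ _
        (Ideal.mul_mem_mul (pow_le_weightFiltration hI i ha) (hu.pow (m - i)).mem_weightFiltration))
      obtain ⟨s, rfl⟩ : ∃ s, m = s + i := ⟨m - i, by omega⟩
      simp only [Nat.add_sub_cancel, smul_eq_mul]
      nlinarith
  exact (hu.pow m).notMem_weightFiltration (pow_ne_zero m hu0) (by simp) hum

end IsIntClosure

theorem quotDepth_eq_zero_of_mul_mem {A : Type*} [CommRing A] {m J : Ideal A} {u : A}
    (hu : u ∉ J) (hmu : ∀ x ∈ m, x * u ∈ J) : quotDepth m J = 0 := by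
  refine Nat.eq_zero_of_le_zero (csSup_le' ?_)
  rintro N ⟨_ | ⟨x, rs⟩, rfl, hm, hreg⟩
  · rfl
  · refine absurd ?_ hu
    rw [← Ideal.Quotient.eq_zero_iff_mem]
    refine (RingTheory.Sequence.isRegular_cons_iff _ _ _ |>.mp hreg).1 ?_
    dsimp only
    rw [smul_zero, Algebra.smul_def, Ideal.Quotient.algebraMap_eq, ← map_mul,
      Ideal.Quotient.eq_zero_iff_mem]
    exact hmu x (hm x List.mem_cons_self)

theorem one_le_ringKrullDim_quotient_of_le_ker {A k : Type*} [CommRing A] [Field k] {J : Ideal A}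
    (f : A →+* Polynomial k) (hf : Function.Surjective f) (hJ : J ≤ RingHom.ker f) :
    1 ≤ ringKrullDim (A ⧸ J) :=
  calc (1 : WithBot ℕ∞) = ringKrullDim (Polynomial k) := by
        simp [Polynomial.ringKrullDim_of_isNoetherianRing, ringKrullDim_eq_zero_of_field]
    _ ≤ ringKrullDim (A ⧸ J) := ringKrullDim_le_of_surjective (Ideal.Quotient.lift J f hJ)
        (Ideal.Quotient.lift_surjective_of_surjective J hJ hf)

theorem mul_mem_pow_of_pairwise {A σ : Type*} [CommRing A] {I : Ideal A} {x : σ → A}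
    (hx : ∀ i j, i ≠ j → x i * x j ∈ I) {p q t : σ} (hpq : p ≠ q) (hpt : p ≠ t) (hqt : q ≠ t)
    (a : σ) (m : ℕ) : x a * (x p ^ (m + 1) * x q ^ (m + 1) * x t) ∈ I ^ (m + 2) := by
  wlog hap : a ≠ p generalizing p q
  · have haq : a ≠ q := by rintro rfl; exact hpq (not_not.mp hap).symm
    rw [mul_comm (x p ^ (m + 1))]
    exact this hpq.symm hqt hpt haq
  rw [show x a * (x p ^ (m + 1) * x q ^ (m + 1) * x t) = x a * x p * (x q * x t) * (x p * x q) ^ m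
    by ring, show m + 2 = 1 + 1 + m by ring, pow_add, pow_add, pow_one]
  exact Ideal.mul_mem_mul (Ideal.mul_mem_mul (hx a p hap) (hx q t hqt))
    (Ideal.pow_mem_pow (hx p q hpq) m)

section StanleyReisner

variable {k σ : Type*} [Field k] {Δ : Set (Finset σ)}

def IsMinimalNonface (Δ : Set (Finset σ)) (F : Finset σ) : Prop :=
  F ∉ Δ ∧ ∀ F' ⊂ F, F' ∈ Δ

theorem IsMinimalNonface.eq_singleton {F : Finset σ} (hF : IsMinimalNonface Δ F) {i : σ}
    (hi : i ∈ F) (hiΔ : {i} ∉ Δ) : F = {i} := by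
  by_contra hne
  exact hiΔ (hF.2 _ (Finset.ssubset_iff_subset_ne.mpr ⟨Finset.singleton_subset_iff.mpr hi,
    Ne.symm hne⟩))

theorem IsMinimalNonface.singleton_mem {F : Finset σ} (hF : IsMinimalNonface Δ F) {i j : σ}
    (hi : i ∈ F) (hiΔ : {i} ∈ Δ) (hj : j ∈ F) : {j} ∈ Δ := by
  by_contra hjΔ
  rw [hF.eq_singleton hj hjΔ, Finset.mem_singleton] at hi
  exact hjΔ (hi ▸ hiΔ)

theorem IsMinimalNonface.disjoint (hV : ∀ s : Finset σ, (∀ i ∈ s, {i} ∈ Δ) → s.card ≤ 2)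
    {F G : Finset σ} (hF : IsMinimalNonface Δ F) (hG : IsMinimalNonface Δ G) (hFG : F ≠ G) :
    Disjoint F G := by
  classical
  by_contra hnd
  obtain ⟨i, hiF, hiG⟩ := Finset.not_disjoint_iff.mp hnd
  by_cases hiΔ : {i} ∈ Δ
  · have hGF : ¬ G ⊆ F := fun h => hG.1 (hF.2 G (Finset.ssubset_iff_subset_ne.mpr ⟨h, hFG.symm⟩))
    have hunion : (F ∪ G).card ≤ 2 := hV _ fun j hj => (Finset.mem_union.mp hj).elim
      (hF.singleton_mem hiF hiΔ) (hG.singleton_mem hiG hiΔ)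
    have hlt : F.card < (F ∪ G).card :=
      Finset.card_lt_card (Finset.ssubset_iff_subset_ne.mpr ⟨Finset.subset_union_left,
        fun h => hGF (h ▸ Finset.subset_union_right)⟩)
    have hFi : F = {i} := Finset.eq_singleton_iff_unique_mem.mpr
      ⟨hiF, fun j hj => Finset.card_le_one.mp (by omega) j hj i hiF⟩
    exact hF.1 (hFi ▸ hiΔ)
  · exact hFG ((hF.eq_singleton hiF hiΔ).trans (hG.eq_singleton hiG hiΔ).symm)

open Classical in
noncomputable def vertexWeight (Δ : Set (Finset σ)) (i : σ) : ℕ :=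
  if {i} ∈ Δ then 1 else 2

theorem two_le_sum_vertexWeight (hΔ : ∅ ∈ Δ) {F : Finset σ} (hF : F ∉ Δ) :
    2 ≤ ∑ i ∈ F, vertexWeight Δ i := by
  rcases (show F.card = 0 ∨ F.card = 1 ∨ 2 ≤ F.card by omega) with h | h | h
  · exact absurd (Finset.card_eq_zero.mp h ▸ hΔ) hF
  · obtain ⟨j, rfl⟩ := Finset.card_eq_one.mp h
    simp [vertexWeight, hF]
  · calc 2 ≤ ∑ _i ∈ F, 1 := by simpa using h
      _ ≤ ∑ i ∈ F, vertexWeight Δ i :=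
        Finset.sum_le_sum fun i _ => by unfold vertexWeight; split_ifs <;> omega

theorem srIdeal_le_weightFiltration (hΔ : ∅ ∈ Δ) :
    (srIdeal Δ : Ideal (MvPolynomial σ k)) ≤ weightFiltration k (vertexWeight Δ) 2 := by
  rw [srIdeal, Ideal.span_le]
  rintro _ ⟨F, hF, rfl⟩
  exact weightFiltration_antitone _ (two_le_sum_vertexWeight hΔ hF)
    (IsWeightedHomogeneous.prod F _ _ fun i _ => isWeightedHomogeneous_X k _ i).mem_weightFiltration

theorem X_mul_X_mem_srIdeal (hΔ : ∀ F ∈ Δ, F.card ≤ 1) {i j : σ} (hij : i ≠ j) :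
    (X i * X j : MvPolynomial σ k) ∈ srIdeal Δ := by
  classical
  refine Ideal.subset_span ⟨{i, j}, fun hmem => ?_, (Finset.prod_pair hij).symm⟩
  have := hΔ _ hmem
  rw [Finset.card_pair hij] at this
  omega

theorem srIdeal_le_ker_aeval [DecidableEq σ] (hΔ : ∅ ∈ Δ) {p : σ} (hp : {p} ∈ Δ) :
    (srIdeal Δ : Ideal (MvPolynomial σ k)) ≤
      RingHom.ker (aeval (Pi.single p Polynomial.X) : MvPolynomial σ k →ₐ[k] Polynomial k) := by
  rw [srIdeal, Ideal.span_le]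
  rintro _ ⟨F, hF, rfl⟩
  obtain ⟨j, hjF, hjp⟩ := Finset.not_subset.mp fun h : F ⊆ {p} =>
    (Finset.subset_singleton_iff.mp h).elim (fun h => hF (h ▸ hΔ)) fun h => hF (h ▸ hp)
  rw [SetLike.mem_coe, RingHom.mem_ker, map_prod]
  exact Finset.prod_eq_zero hjF (by simp [Finset.mem_singleton.not.mp hjp])

theorem aeval_single_X_surjective [DecidableEq σ] (p : σ) :
    Function.Surjective
      (aeval (Pi.single p Polynomial.X) : MvPolynomial σ k →ₐ[k] Polynomial k) := by
  intro f
  refine ⟨Polynomial.aeval (X p) f, ?_⟩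
  have hid : (aeval (Pi.single p Polynomial.X)).comp (Polynomial.aeval (X p)) = AlgHom.id k _ :=
    Polynomial.algHom_ext (by simp)
  rw [← AlgHom.comp_apply, hid]
  rfl

theorem not_quotIsCM_of_two_lt_card [DecidableEq σ] (hΔ : ∅ ∈ Δ) (hface : ∀ F ∈ Δ, F.card ≤ 1)
    {s : Finset σ} (hs : ∀ i ∈ s, {i} ∈ Δ) (hs2 : 2 < s.card) {n : ℕ} (hn : 2 ≤ n)
    {J : Ideal (MvPolynomial σ k)} (hJ : IsIntClosure (srIdeal Δ ^ n) J) :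
    ¬ QuotIsCM (maxIdeal k σ) J := by
  obtain ⟨p, hp, q, hq, t, ht, hpq, hpt, hqt⟩ := Finset.two_lt_card.mp hs2
  obtain ⟨m, rfl⟩ : ∃ m, n = m + 2 := ⟨n - 2, by omega⟩
  set u : MvPolynomial σ k := X p ^ (m + 1) * X q ^ (m + 1) * X t
  have hu : u ∉ J := by
    refine hJ.notMem_of_isWeightedHomogeneous
      (pow_le_weightFiltration (srIdeal_le_weightFiltration hΔ) _)
      ((((isWeightedHomogeneous_X k _ p).pow _).mul ((isWeightedHomogeneous_X k _ q).pow _)).mul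
        (isWeightedHomogeneous_X k _ t)) (by simp [u, X_ne_zero]) ?_
    simp only [vertexWeight, hs p hp, hs q hq, hs t ht, if_true, smul_eq_mul]
    omega
  have hmax : maxIdeal k σ ≤ J.colon {u} :=
    Ideal.span_le.mpr <| Set.range_subset_iff.mpr fun a => Submodule.mem_colon_singleton.mpr
      (hJ.le (mul_mem_pow_of_pairwise (fun _ _ => X_mul_X_mem_srIdeal hface) hpq hpt hqt a m))
  have hdepth : quotDepth (maxIdeal k σ) J = 0 :=
    quotDepth_eq_zero_of_mul_mem hu fun x hx => Submodule.mem_colon_singleton.mp (hmax hx)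
  have hker : J ≤ RingHom.ker
      (aeval (Pi.single p Polynomial.X) : MvPolynomial σ k →ₐ[k] Polynomial k) :=
    hJ.le_of_le_isPrime (RingHom.ker_isPrime _)
      ((Ideal.pow_le_self (by omega)).trans (srIdeal_le_ker_aeval hΔ (hs p hp)))
  have hdim : 1 ≤ ringKrullDim (MvPolynomial σ k ⧸ J) :=
    one_le_ringKrullDim_quotient_of_le_ker _ (aeval_single_X_surjective p) hker
  intro hCM
  rw [← hCM, hdepth] at hdim
  exact absurd hdim (by decide)

end StanleyReisner

/-- if `Δ` is a 0-dimensional simplicial complex and `\overline{I_Δ^n}` is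
Cohen-Macaulay for some `n ≥ 2`, then `I_Δ` is a complete intersection (any two distinct
minimal non-faces, i.e. minimal monomial generators, share no vertex/variable), and `Δ`
has at most two vertices. -/
theorem complete_intersection_of_CM_intClosure_dim_zero {k : Type*} [Field k] {r : ℕ}
    (Δ : Set (Finset (Fin r))) (hΔ : IsSimplicialComplex Δ)
    (hdim : (∀ F ∈ Δ, F.card ≤ 1) ∧ ∃ F ∈ Δ, F.card = 1)
    (n : ℕ) (hn : 2 ≤ n)
    (J : Ideal (MvPolynomial (Fin r) k))
    (hJ : IsIntClosure ((srIdeal Δ : Ideal (MvPolynomial (Fin r) k)) ^ n) J)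
    (hCM : QuotIsCM (maxIdeal k (Fin r)) J) :
    (∀ F G : Finset (Fin r),
      (F ∉ Δ ∧ ∀ F' ⊂ F, F' ∈ Δ) → (G ∉ Δ ∧ ∀ G' ⊂ G, G' ∈ Δ) → F ≠ G → Disjoint F G) ∧
    Set.ncard {i : Fin r | {i} ∈ Δ} ≤ 2 := by
  have hV : ∀ s : Finset (Fin r), (∀ i ∈ s, {i} ∈ Δ) → s.card ≤ 2 := fun s hs =>
    not_lt.mp fun hs2 => not_quotIsCM_of_two_lt_card hΔ.1 hdim.1 hs hs2 hn hJ hCM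
  refine ⟨fun F G hF hG => IsMinimalNonface.disjoint hV hF hG, ?_⟩
  rw [Set.ncard_eq_toFinset_card _ (Set.toFinite _)]
  exact hV _ fun i hi => by simpa using hi
end
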